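/- Identifying each Towers-of-Bucharest configuration with the ternary n-tuple (a_n,...,a_1) where a_i ∈ {0,1,2} is the peg of disk D_i, the sequence of configurations along the unique Hamiltonian path from all-on-P_0 to all-on-P_2 is exactly the ternary reflected Gray code: consecutive tuples differ in exactly one digit, and in it by ±1. -/

import Mathlib

/-- A configuration of the Towers of Bucharest/Hanoi with `n` disks assigns to
each disk `D_{d+1}` (disk `d : Fin n`; smaller index means smaller disk) the
peg `c d : Fin 3` on which it lies.  Disks on the same peg are necessarily
stacked in size order. -/
abbrev HanoiConf (n : ℕ) := Fin n → Fin 3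

/-- A legal move of the Towers of Bucharest: some disk `d` which is topmost on
its peg (no smaller disk on the same peg) moves to an *adjacent* peg
(`P₀ ↔ P₁` or `P₁ ↔ P₂`) carrying no smaller disk; all other disks stay. -/
def bucharestMove {n : ℕ} (c c' : HanoiConf n) : Prop :=
  ∃ d : Fin n,
    c d ≠ c' d ∧
    ((c d : ℕ) + 1 = (c' d : ℕ) ∨ (c' d : ℕ) + 1 = (c d : ℕ)) ∧
    (∀ e, e ≠ d → c e = c' e) ∧
    (∀ e, e < d → c e ≠ c d ∧ c e ≠ c' d)

/-- The `m`-ary reflected Gray code on `n`-tuples (least significant digit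
last in the list): for `n = 0` the single empty tuple; each codeword `Cᵢ`
(1-indexed `i`) of the code for length `n` is extended by the digits
`0, …, m-1` in increasing order if `i` is odd, decreasing if `i` is even. -/
def mGray (m : ℕ) : ℕ → List (List ℕ)
  | 0 => [[]]
  | n + 1 =>
      (((List.range (mGray m n).length).zip (mGray m n)).map (fun p =>
        (if p.1 % 2 = 0 then List.range m else (List.range m).reverse).map
          (fun d => p.2 ++ [d]))).flatten

/-- The ternary tuple `(a_n, …, a_1)` associated with a configuration, where
`a_i ∈ {0,1,2}` is the peg of disk `D_i` (so `a_n` comes first). -/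
def confTuple {n : ℕ} (c : HanoiConf n) : List ℕ :=
  (List.ofFn (fun d : Fin n => (c d : ℕ))).reverse

/-!
Every move of a larger disk goes between two adjacent pegs, one of which is the middle peg `P₁`,
so while the smallest disk sits on `P₁` only the smallest disk can move. Hence on a Hamiltonian
path each configuration with the smallest disk on `P₁` lies between the two configurations that
differ from it only in the smallest disk, and the path starting with the smallest disk on an
outer peg begins with the three configurations above a fixed position of the larger disks, the
smallest disk sweeping `0, 1, 2` or `2, 1, 0`. The next larger-disk move leaves the smallest
disk where it is, so the sweeps alternate in direction, and the configurations of the larger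
disks, one per sweep, form a Hamiltonian path of the puzzle with one disk fewer: by induction
their tuples form the Gray code on `n - 1` digits, and `mGray` extends each codeword by exactly
such alternating sweeps of a new last digit.
-/

namespace List

variable {α β γ : Type*}

def boustrophedon (s : List β) (f : α → β → γ) : Bool → List α → List γ
  | _, [] => []
  | b, a :: L => (if b then s.reverse else s).map (f a) ++ boustrophedon s f (!b) L

section Boustrophedon

variable {s : List β} {f : α → β → γ}

theorem boustrophedon_cons (b : Bool) (a : α) (L : List α) :
    boustrophedon s f b (a :: L) =
      (if b then s.reverse else s).map (f a) ++ boustrophedon s f (!b) L :=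
  rfl

theorem length_boustrophedon (b : Bool) (L : List α) :
    (boustrophedon s f b L).length = s.length * L.length := by
  induction L generalizing b with
  | nil => rfl
  | cons a L ih => cases b <;> simp [boustrophedon_cons, ih, Nat.mul_succ, Nat.add_comm]

theorem mem_boustrophedon {b : Bool} {L : List α} {x : γ} :
    x ∈ boustrophedon s f b L ↔ ∃ a ∈ L, ∃ d ∈ s, f a d = x := by
  induction L generalizing b with
  | nil => simp [boustrophedon]
  | cons a L ih => cases b <;> simp [boustrophedon_cons, ih]

theorem map_boustrophedon {δ ε ζ : Type*} {g : γ → ε} {h : α → δ} {k : β → ζ}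
    {f' : δ → ζ → ε} (hg : ∀ a d, g (f a d) = f' (h a) (k d)) (b : Bool) (L : List α) :
    (boustrophedon s f b L).map g = boustrophedon (s.map k) f' b (L.map h) := by
  induction L generalizing b with
  | nil => rfl
  | cons a L ih => cases b <;> simp [boustrophedon_cons, ih, hg, map_reverse]

theorem Nodup.of_boustrophedon (hs : s ≠ []) {b : Bool} {L : List α}
    (h : (boustrophedon s f b L).Nodup) : L.Nodup := by
  induction L generalizing b with
  | nil => exact nodup_nil
  | cons a L ih =>
    rw [boustrophedon_cons, nodup_append] at h
    obtain ⟨d, hd⟩ := exists_mem_of_ne_nil s hs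
    refine nodup_cons.2 ⟨fun ha => ?_, ih h.2.1⟩
    exact h.2.2 (f a d) (by cases b <;> simpa using ⟨d, hd, rfl⟩) (f a d)
      (mem_boustrophedon.2 ⟨a, ha, d, hd, rfl⟩) rfl

theorem IsChain.of_boustrophedon {R : γ → γ → Prop} {R' : α → α → Prop}
    (hR : ∀ a a' d d', a ≠ a' → R (f a d) (f a' d') → R' a a') (hs : s ≠ []) {b : Bool}
    {L : List α} (hL : L.Nodup) (h : (boustrophedon s f b L).IsChain R) : L.IsChain R' := by
  induction L generalizing b with
  | nil => exact .nil
  | cons a L ih =>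
    rw [boustrophedon_cons, isChain_append] at h
    refine List.isChain_cons.2 ⟨fun a' ha' => ?_, ih (nodup_cons.1 hL).2 h.2.1⟩
    cases L with
    | nil => simp at ha'
    | cons a'' L =>
      obtain rfl : a'' = a' := by simpa using ha'
      have hd := head?_eq_some_head hs
      have he := getLast?_eq_some_getLast hs
      have hne : a ≠ a'' := fun h' => (nodup_cons.1 hL).1 (h' ▸ mem_cons_self)
      cases b
      · exact hR _ _ (s.getLast hs) (s.getLast hs) hne <|
          h.2.2 _ (by simp [he]) _ (by simp [boustrophedon_cons, he])
      · exact hR _ _ (s.head hs) (s.head hs) hne <|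
          h.2.2 _ (by simp [hd]) _ (by simp [boustrophedon_cons, hd])

theorem map_head?_boustrophedon {g : γ → α} (hg : ∀ a d, g (f a d) = a) (hs : s ≠ [])
    (b : Bool) (L : List α) : (boustrophedon s f b L).head?.map g = L.head? := by
  cases L with
  | nil => rfl
  | cons a L =>
    have := head?_eq_some_head hs
    have := getLast?_eq_some_getLast hs
    cases b <;> simp [boustrophedon_cons, *]

theorem map_getLast?_boustrophedon {g : γ → α} (hg : ∀ a d, g (f a d) = a) (hs : s ≠ [])
    (b : Bool) (L : List α) : (boustrophedon s f b L).getLast?.map g = L.getLast? := by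
  induction L generalizing b with
  | nil => rfl
  | cons a L ih =>
    cases L with
    | nil =>
      have := head?_eq_some_head hs
      have := getLast?_eq_some_getLast hs
      cases b <;> simp [boustrophedon, *]
    | cons a' L =>
      have hne : boustrophedon s f (!b) (a' :: L) ≠ [] := by
        rw [← length_pos_iff, length_boustrophedon]
        exact Nat.mul_pos (length_pos_iff.2 hs) (Nat.succ_pos _)
      rw [boustrophedon_cons, getLast?_append_of_ne_nil _ hne, ih, getLast?_cons_cons]

end Boustrophedon

theorem boustrophedon_eq_flatten (s : List β) (f : α → β → γ) (i : ℕ) (L : List α) :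
    boustrophedon s f (i % 2 == 1) L =
      ((range' i L.length).zip L |>.map fun p =>
        (if p.1 % 2 = 0 then s else s.reverse).map (f p.2)).flatten := by
  induction L generalizing i with
  | nil => rfl
  | cons a L ih =>
    rw [length_cons, range'_succ, zip_cons_cons, map_cons, flatten_cons, ← ih,
      boustrophedon_cons]
    rcases Nat.mod_two_eq_zero_or_one i with h | h <;>
      simp [h, Nat.add_mod]

theorem exists_eq_append_cons_cons_cons {l : List α} {x : α} (hx : x ∈ l)
    (hhead : l.head? ≠ some x) (hlast : l.getLast? ≠ some x) :
    ∃ s y z t, l = s ++ y :: x :: z :: t := by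
  obtain ⟨s, t, rfl⟩ := append_of_mem hx
  obtain rfl | ⟨s, y, rfl⟩ := eq_nil_or_concat' s
  · simp at hhead
  cases t with
  | nil => simp at hlast
  | cons z t => exact ⟨s, y, z, t, by simp⟩

theorem Nodup.mem_of_length_eq_card [Fintype α] {l : List α} (hl : l.Nodup)
    (hcard : l.length = Fintype.card α) (x : α) : x ∈ l := by
  classical
  have : l.toFinset = Finset.univ :=
    Finset.eq_univ_of_card _ (by rw [toFinset_card_of_nodup hl, hcard])
  rw [← mem_toFinset, this]
  exact Finset.mem_univ x

end List

theorem mGray_succ (m n : ℕ) :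
    mGray m (n + 1) =
      List.boustrophedon (List.range m) (fun w d => w ++ [d]) false (mGray m n) := by
  have := List.boustrophedon_eq_flatten (List.range m) (fun w d => w ++ [d]) 0 (mGray m n)
  rw [← List.range_eq_range'] at this
  exact this.symm

theorem confTuple_cons {n : ℕ} (d : Fin 3) (u : HanoiConf n) :
    confTuple (Fin.cons d u) = confTuple u ++ [(d : ℕ)] := by
  simp [confTuple, List.ofFn_succ]

theorem HanoiConf.ext_of_tail_eq {n : ℕ} {c c' : HanoiConf (n + 1)}
    (ht : Fin.tail c = Fin.tail c') (h0 : c 0 = c' 0) : c = c' := by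
  rw [← Fin.cons_self_tail c, ← Fin.cons_self_tail c', h0, ht]

namespace bucharestMove

variable {n : ℕ}

theorem ne {c c' : HanoiConf n} (h : bucharestMove c c') : c ≠ c' := by
  obtain ⟨d, hd, -⟩ := h
  exact fun h' => hd (h' ▸ rfl)

theorem symm {c c' : HanoiConf n} (h : bucharestMove c c') : bucharestMove c' c := by
  obtain ⟨d, hd, hadj, hrest, hsmall⟩ := h
  refine ⟨d, hd.symm, hadj.symm, fun e he => (hrest e he).symm, fun e he => ?_⟩
  rw [← hrest e he.ne]
  exact (hsmall e he).symm

theorem of_tail_ne {c c' : HanoiConf (n + 1)} (h : bucharestMove c c')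
    (ht : Fin.tail c ≠ Fin.tail c') :
    c 0 = c' 0 ∧ c 0 ≠ 1 ∧ bucharestMove (Fin.tail c) (Fin.tail c') := by
  obtain ⟨d, hd, hadj, hrest, hsmall⟩ := h
  cases d using Fin.cases with
  | zero => exact absurd (funext fun e => hrest e.succ (Fin.succ_ne_zero e)) ht
  | succ d =>
    obtain ⟨h0, h0'⟩ := hsmall 0 (Fin.succ_pos d)
    refine ⟨hrest 0 (Fin.succ_ne_zero d).symm, fun h1 => ?_, d, hd, hadj,
      fun e he => hrest e.succ (Fin.succ_injective _ |>.ne he),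
      fun e he => hsmall e.succ (Fin.succ_lt_succ_iff.2 he)⟩
    rw [h1] at h0 h0'
    omega

theorem tail_eq_of_zero_eq_one {c c' : HanoiConf (n + 1)}
    (h : bucharestMove c c') (h1 : c 0 = 1) : Fin.tail c' = Fin.tail c ∧ c' 0 ≠ 1 := by
  have ht : Fin.tail c' = Fin.tail c := by
    by_contra ht
    exact (h.of_tail_ne (Ne.symm ht)).2.1 h1
  exact ⟨ht, fun h1' => h.ne (HanoiConf.ext_of_tail_eq ht.symm (h1.trans h1'.symm))⟩

end bucharestMove

theorem HanoiConf.eq_or_eq_of_tail_eq {n : ℕ} {p q r : HanoiConf (n + 1)}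
    (hq : Fin.tail q = Fin.tail p) (hr : Fin.tail r = Fin.tail p)
    (hp1 : p 0 ≠ 1) (hq1 : q 0 ≠ 1) (hr1 : r 0 ≠ 1) (hqr : q ≠ r) : p = q ∨ p = r := by
  have hpeg : ∀ x y z : Fin 3, x ≠ 1 → y ≠ 1 → z ≠ 1 → y ≠ z → x = y ∨ x = z := by decide
  rcases hpeg _ _ _ hp1 hq1 hr1 fun h => hqr (ext_of_tail_eq (hq.trans hr.symm) h) with h | h
  · exact Or.inl (ext_of_tail_eq hq.symm h)
  · exact Or.inr (ext_of_tail_eq hr.symm h)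

theorem exists_eq_cons_cons_cons_of_isChain {n : ℕ} {l : List (HanoiConf (n + 1))}
    {a : HanoiConf (n + 1)} (hchain : l.IsChain bucharestMove) (hnd : l.Nodup)
    (hsat : ∀ c ∈ l, ∀ d, Fin.cons d (Fin.tail c) ∈ l)
    (hhead : l.head? = some a) (ha : a 0 ≠ 1) (hlast : ∀ c ∈ l.getLast?, c 0 ≠ 1) :
    ∃ z rest, l = a :: Fin.cons 1 (Fin.tail a) :: z :: rest ∧
      Fin.tail z = Fin.tail a ∧ z 0 ≠ 1 := by
  set x : HanoiConf (n + 1) := Fin.cons 1 (Fin.tail a)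
  have hx0 : x 0 = 1 := rfl
  have hxa : Fin.tail x = Fin.tail a := Fin.tail_cons _ _
  obtain ⟨s, y, z, t, rfl⟩ := List.exists_eq_append_cons_cons_cons
    (hsat a (List.mem_of_mem_head? hhead) 1)
    (by rw [hhead]; exact fun h => ha (Option.some_inj.1 h ▸ hx0)) (fun h => hlast x h hx0)
  simp only [List.isChain_append_cons_cons, List.isChain_cons_cons] at hchain
  obtain ⟨hy, hy1⟩ := hchain.2.1.symm.tail_eq_of_zero_eq_one hx0
  obtain ⟨hz, hz1⟩ := hchain.2.2.1.tail_eq_of_zero_eq_one hx0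
  have hyz : y ≠ z := by
    rintro rfl
    simp [List.nodup_append] at hnd
  -- `a` is `y` or `z`; as the head of a duplicate-free list it must be `y`, with `s = []`
  have hay := HanoiConf.eq_or_eq_of_tail_eq (hy.trans hxa) (hz.trans hxa) ha hy1 hz1 hyz
  cases s with
  | nil =>
    obtain rfl : y = a := by simpa using hhead
    exact ⟨z, t, rfl, hz.trans hxa, hz1⟩
  | cons c s =>
    obtain rfl : c = a := by simpa using hhead
    rcases hay with rfl | rfl <;> simp [List.nodup_append] at hnd

def smallDiskSweep {n : ℕ} (b : Bool) (u : HanoiConf n) : List (HanoiConf (n + 1)) :=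
  (if b then (List.finRange 3).reverse else List.finRange 3).map fun d => Fin.cons d u

theorem mem_smallDiskSweep {n : ℕ} {b : Bool} {u : HanoiConf n} {c : HanoiConf (n + 1)} :
    c ∈ smallDiskSweep b u ↔ Fin.tail c = u := by
  refine ⟨fun h => ?_, fun h => ?_⟩
  · obtain ⟨d, -, rfl⟩ := List.mem_map.1 h
    exact Fin.tail_cons _ _
  · subst h
    cases b <;> simpa [smallDiskSweep] using ⟨c 0, Fin.cons_self_tail c⟩

theorem tail_ne_of_nodup_smallDiskSweep_append {n : ℕ} {b : Bool} {u : HanoiConf n}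
    {rest : List (HanoiConf (n + 1))} {c : HanoiConf (n + 1)}
    (hnd : (smallDiskSweep b u ++ rest).Nodup) (hc : c ∈ rest) : Fin.tail c ≠ u :=
  fun h => List.disjoint_of_nodup_append hnd (mem_smallDiskSweep.2 h) hc

theorem exists_eq_smallDiskSweep_append {n : ℕ} (b : Bool) {l : List (HanoiConf (n + 1))}
    {a : HanoiConf (n + 1)} (hchain : l.IsChain bucharestMove) (hnd : l.Nodup)
    (hsat : ∀ c ∈ l, ∀ d, Fin.cons d (Fin.tail c) ∈ l)
    (hhead : l.head? = some a) (ha : a 0 = if b then 2 else 0)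
    (hlast : ∀ c ∈ l.getLast?, c 0 ≠ 1) :
    ∃ rest, l = smallDiskSweep b (Fin.tail a) ++ rest ∧
      ∀ w ∈ rest.head?, w 0 = if !b then 2 else 0 := by
  obtain ⟨z, rest, rfl, hz, hz1⟩ := exists_eq_cons_cons_cons_of_isChain hchain hnd hsat hhead
    (by cases b <;> simp [ha]) hlast
  have hz0 : z 0 = if !b then 2 else 0 := by
    have hpeg : ∀ b : Bool, ∀ q : Fin 3, q ≠ 1 → q ≠ (if b then 2 else 0) →
        q = if !b then 2 else 0 := by decide
    refine hpeg b _ hz1 fun h => ?_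
    rw [HanoiConf.ext_of_tail_eq hz (h.trans ha.symm)] at hnd
    simp at hnd
  have hsweep :
      a :: Fin.cons 1 (Fin.tail a) :: z :: rest = smallDiskSweep b (Fin.tail a) ++ rest := by
    have hz' : z = Fin.cons (if !b then 2 else 0) (Fin.tail a) := by
      rw [← hz0, ← hz, Fin.cons_self_tail]
    nth_rewrite 1 [← Fin.cons_self_tail a]
    rw [hz', ha]
    cases b <;> rfl
  refine ⟨rest, hsweep, fun w hw => ?_⟩
  rw [List.isChain_cons_cons, List.isChain_cons_cons, List.isChain_cons] at hchain
  have htail := tail_ne_of_nodup_smallDiskSweep_append (hsweep ▸ hnd) (List.mem_of_mem_head? hw)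
  rw [← hz0, ((hchain.2.2.1 w hw).of_tail_ne (hz ▸ htail.symm)).1]

theorem exists_eq_boustrophedon_of_isChain {n : ℕ} (b : Bool) {l : List (HanoiConf (n + 1))}
    (hchain : l.IsChain bucharestMove) (hnd : l.Nodup)
    (hsat : ∀ c ∈ l, ∀ d, Fin.cons d (Fin.tail c) ∈ l)
    (hhead : ∀ c ∈ l.head?, c 0 = if b then 2 else 0) (hlast : ∀ c ∈ l.getLast?, c 0 ≠ 1) :
    ∃ L, l = List.boustrophedon (List.finRange 3) (fun u d => Fin.cons d u) b L := by
  induction hlen : l.length using Nat.strong_induction_on generalizing l b with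
  | _ k ih =>
  cases l with
  | nil => exact ⟨[], rfl⟩
  | cons a l₀ =>
  obtain ⟨rest, hl, hrest⟩ :=
    exists_eq_smallDiskSweep_append b hchain hnd hsat rfl (hhead a rfl) hlast
  rw [hl] at hchain hnd hsat hlast
  have htail c (hc : c ∈ rest) := tail_ne_of_nodup_smallDiskSweep_append hnd hc
  obtain ⟨L, hL⟩ := ih rest.length (by cases b <;> simp [← hlen, hl, smallDiskSweep]) (!b)
    hchain.right_of_append (List.nodup_append.1 hnd).2.1
    (fun c hc d => (List.mem_append.1 (hsat c (List.mem_append_right _ hc) d)).resolve_left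
      fun h => htail c hc (by simpa using mem_smallDiskSweep.1 h))
    hrest (fun c hc => hlast c (by simp [List.getLast?_append, Option.mem_def.1 hc])) rfl
  exact ⟨Fin.tail a :: L, by rw [hl, hL]; rfl⟩

/-- Along any Hamiltonian path of the Towers-of-Bucharest state graph from the
all-on-`P₀` configuration to the all-on-`P₂` configuration, the sequence of
associated ternary tuples `(a_n, …, a_1)` is exactly the ternary reflected
Gray code (in which consecutive tuples differ in exactly one digit, by ±1). -/
theorem bucharest_path_is_ternary_gray (n : ℕ) (l : List (HanoiConf n))
    (hlen : l.length = 3 ^ n) (hnd : l.Nodup)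
    (hhead : l.head? = some (fun _ => 0)) (hlast : l.getLast? = some (fun _ => 2))
    (hchain : l.Chain' bucharestMove) :
    l.map confTuple = mGray 3 n := by
  induction n with
  | zero =>
    obtain ⟨c, rfl⟩ := List.length_eq_one_iff.1 hlen
    rfl
  | succ n ih =>
    have hs : List.finRange 3 ≠ [] := by simp
    have htail (u : HanoiConf n) (d : Fin 3) : Fin.tail (Fin.cons d u : HanoiConf (n + 1)) = u :=
      Fin.tail_cons (α := fun _ => Fin 3) d u
    obtain ⟨L, rfl⟩ := exists_eq_boustrophedon_of_isChain false hchain hnd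
      (fun _ _ _ => hnd.mem_of_length_eq_card (by simp [hlen]) _)
      (by simp [hhead]) (by simp [hlast])
    have hL : L.Nodup := hnd.of_boustrophedon hs
    have hgray := ih L (by simpa [List.length_boustrophedon, pow_succ, mul_comm] using hlen) hL
      (by rw [← List.map_head?_boustrophedon htail hs false L, hhead]; rfl)
      (by rw [← List.map_getLast?_boustrophedon htail hs false L, hlast]; rfl)
      (List.IsChain.of_boustrophedon (fun _ _ _ _ hne h => (h.of_tail_ne hne).2.2) hs hL hchain)
    rw [List.map_boustrophedon (k := Fin.val) (f' := fun w d => w ++ [d])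
        (fun u d => confTuple_cons d u), hgray,
      List.map_coe_finRange_eq_range, mGray_succ]
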